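/- arXiv:math/0610668 — 2 statements merged into one kernel-verified Lean document; each statement's English description precedes it below -/
import Mathlib

section
/- The center of the right-angled Artin group A_Γ is the special subgroup generated by the set of vertices of Γ that are adjacent to every other vertex; in particular, if no vertex is adjacent to all others, the center of A_Γ is trivial. -/
/-- The commutator relations of the right-angled Artin group of a graph `G`. -/
def raagRels {V : Type*} (G : SimpleGraph V) : Set (FreeGroup V) :=
  {r | ∃ s t : V, G.Adj s t ∧
    r = FreeGroup.of s * FreeGroup.of t * (FreeGroup.of s)⁻¹ * (FreeGroup.of t)⁻¹}

/-- The right-angled Artin group of a graph `G`. -/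
abbrev RAAG {V : Type*} (G : SimpleGraph V) : Type _ := PresentedGroup (raagRels G)

/-!
If `v` is not a universal vertex, `A_Γ` is the HNN extension of `A_{Γ - v}` whose stable
letter `v` acts trivially on the subgroup generated by the link of `v`. By Britton's lemma a
central element of such an HNN extension lies in the base group, where it is central and, since
it commutes with the stable letter, lies in the associated subgroup. By induction on the number
of vertices, a central element of `A_Γ` is therefore a word in the universal vertices of `Γ - v`
and also a word in the link of `v`; the retractions `A_Γ → A_Γ` killing all generators outside
a set show that it is then a word in the universal vertices of `Γ - v` adjacent to `v`, and
these are universal in `Γ`.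
-/

namespace HNNExtension

open NormalWord

variable {G : Type*} [Group G] {A B : Subgroup G} {φ : A ≃* B}

theorem mem_of_t_mul_of_eq {g : G} (h : t * of g = of g * (t : HNNExtension G A B φ)) :
    g ∈ A := by
  by_contra hg
  -- otherwise `t g t⁻¹ g⁻¹` is a reduced word with trivial product
  let w : ReducedWord G A B :=
    ⟨1, [(1, g), (-1, g⁻¹)], List.isChain_pair.2 fun hmem => absurd hmem hg⟩
  have hprod : w.prod φ ∈ (of : G →* HNNExtension G A B φ).range := by
    refine ⟨1, ?_⟩
    simp [w, ReducedWord.prod, ← mul_assoc, h]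
  simpa [w] using ReducedWord.toList_eq_nil_of_mem_of_range φ w hprod

theorem ReducedWord.inv_mul_mul_mem_toSubgroup_of_commute (w : ReducedWord G A B)
    (hw : w.toList ≠ []) {c : G} (hc : Commute (of c : HNNExtension G A B φ) (w.prod φ)) :
    w.head⁻¹ * c * w.head ∈ toSubgroup A B (-(w.toList.head hw).1) := by
  -- `of c * w.prod * (of c)⁻¹` has the reduced word `w` with `c` pushed into the head and
  -- `c⁻¹` into the last letter; Britton's lemma compares the two heads
  obtain ⟨L, a, hL⟩ : ∃ L a, w.toList = L ++ [a] :=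
    ⟨_, _, (List.dropLast_append_getLast hw).symm⟩
  have hchain := w.chain
  rw [hL, List.isChain_append] at hchain
  let w' : ReducedWord G A B :=
    ⟨c * w.head, L ++ [(a.1, a.2 * c⁻¹)],
      List.isChain_append.2 ⟨hchain.1, List.isChain_singleton _,
        fun x hx y hy => by
          obtain rfl : (a.1, a.2 * c⁻¹) = y := by simpa using hy
          exact hchain.2.2 x hx a (by simp)⟩⟩
  have hprod : w.prod φ = w'.prod φ :=
    calc w.prod φ = of c * w.prod φ * (of c)⁻¹ := by rw [hc.eq, mul_inv_cancel_right]
      _ = w'.prod φ := by simp [w', ReducedWord.prod, hL, mul_assoc]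
  have hhead : (w.toList.head hw).1 ∈ w.toList.head?.map Prod.fst := by
    simp [List.head?_eq_some_head hw]
  simpa [w', mul_assoc] using (ReducedWord.map_fst_eq_and_of_prod_eq φ hprod).2 _ hhead

theorem center_le_range_of (g₀ : G) (hA : g₀ ∉ A) (hB : g₀ ∉ B) :
    Subgroup.center (HNNExtension G A B φ) ≤ of.range := by
  intro x hx
  obtain ⟨d⟩ := TransversalPair.nonempty G A B
  let w : NormalWord d := x • NormalWord.empty
  have hw : w.prod φ = x := by rw [NormalWord.prod_smul, NormalWord.prod_empty, mul_one]
  by_cases hL : w.toList = []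
  · refine ⟨w.head, ?_⟩
    simpa [ReducedWord.prod, hL] using hw
  · rw [← hw] at hx
    have := ReducedWord.inv_mul_mul_mem_toSubgroup_of_commute w.toReducedWord hL
      (Subgroup.mem_center_iff.1 hx (of (w.head * g₀ * w.head⁻¹)))
    simp only [mul_assoc, inv_mul_cancel_left, inv_mul_cancel, mul_one] at this
    rcases Int.units_eq_one_or (w.toList.head hL).1 with h | h
    · exact (hB (by simpa [h] using this)).elim
    · exact (hA (by simpa [h] using this)).elim

theorem center_le_map_center_inf {ψ : A ≃* A} (hA : A ≠ ⊤) :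
    Subgroup.center (HNNExtension G A A ψ) ≤ (Subgroup.center G ⊓ A).map of := by
  intro x hx
  obtain ⟨g₀, hg₀⟩ := SetLike.exists_not_mem_of_ne_top A hA
  obtain ⟨g, rfl⟩ := center_le_range_of g₀ hg₀ hg₀ hx
  refine ⟨g, Subgroup.mem_inf.2 ⟨?_, mem_of_t_mul_of_eq (Subgroup.mem_center_iff.1 hx t)⟩, rfl⟩
  rw [Subgroup.mem_center_iff]
  intro y
  apply of_injective (φ := ψ)
  simpa using Subgroup.mem_center_iff.1 hx (of y)

end HNNExtension

namespace RAAG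

open PresentedGroup Subgroup

variable {V : Type*} {G : SimpleGraph V}

def lift {H : Type*} [Group H] (f : V → H) (hf : ∀ s t, G.Adj s t → Commute (f s) (f t)) :
    RAAG G →* H :=
  PresentedGroup.toGroup (f := f) <| by
    rintro _ ⟨s, t, hst, rfl⟩
    simpa [commutatorElement_def] using commutatorElement_eq_one_iff_commute.2 (hf s t hst)

@[simp]
theorem lift_of {H : Type*} [Group H] (f : V → H)
    (hf : ∀ s t, G.Adj s t → Commute (f s) (f t)) (u : V) :
    lift f hf (of u : RAAG G) = f u :=
  toGroup.of _

theorem commute_of_adj {s t : V} (h : G.Adj s t) : Commute (of s : RAAG G) (of t) := by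
  have := one_of_mem (rels := raagRels G) ⟨s, t, h, rfl⟩
  simp only [map_mul, map_inv] at this
  exact commutatorElement_eq_one_iff_commute.1 this

theorem of_ne_one (u : V) : (of u : RAAG G) ≠ 1 := by
  intro h
  have := congrArg (lift (G := G) (fun _ => Multiplicative.ofAdd (1 : ℤ))
    fun _ _ _ => Commute.all _ _) h
  simp at this

theorem of_mem_center {v : V} (hv : G.IsUniversal v) : (of v : RAAG G) ∈ center (RAAG G) := by
  suffices closure (Set.range of) ≤ centralizer {(of v : RAAG G)} by
    rw [closure_range_of, top_le_iff, centralizer_eq_top_iff_subset,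
      Set.singleton_subset_iff] at this
    exact this
  rw [closure_le, Set.range_subset_iff]
  intro u
  rw [SetLike.mem_coe, mem_centralizer_singleton_iff]
  rcases eq_or_ne v u with rfl | hvu
  · rfl
  · exact (commute_of_adj (hv hvu)).eq.symm

open Classical in
noncomputable def retract (S : Set V) : RAAG G →* RAAG G :=
  lift (S.mulIndicator of) fun s t hst => by
    by_cases hs : s ∈ S <;> by_cases ht : t ∈ S <;>
      simp [Set.mulIndicator, hs, ht, commute_of_adj hst]

theorem retract_of (S : Set V) (u : V) : retract S (of u : RAAG G) = S.mulIndicator of u :=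
  lift_of _ _ u

theorem retract_eq_self {S : Set V} {x : RAAG G} (hx : x ∈ closure (of '' S)) :
    retract S x = x := by
  suffices closure (of '' S) ≤ (retract S).eqLocus (MonoidHom.id _) from this hx
  rw [closure_le]
  rintro _ ⟨u, hu, rfl⟩
  exact (retract_of S u).trans (Set.mulIndicator_of_mem hu _)

theorem retract_mem_closure (S : Set V) {T : Set V} {x : RAAG G} (hx : x ∈ closure (of '' T)) :
    retract S x ∈ closure (of '' (S ∩ T)) := by
  suffices (closure (of '' T)).map (retract S) ≤ closure (of '' (S ∩ T)) from
    this (mem_map_of_mem _ hx)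
  rw [MonoidHom.map_closure, closure_le]
  rintro _ ⟨_, ⟨u, hu, rfl⟩, rfl⟩
  by_cases huS : u ∈ S
  · rw [retract_of, Set.mulIndicator_of_mem huS]
    exact subset_closure (Set.mem_image_of_mem _ ⟨huS, hu⟩)
  · rw [retract_of, Set.mulIndicator_of_notMem huS]
    exact one_mem _

theorem closure_of_image_inter (S T : Set V) :
    closure (of '' (S ∩ T)) = closure (of '' S) ⊓ (closure (of '' T) : Subgroup (RAAG G)) := by
  refine le_antisymm (le_inf (closure_mono (Set.image_mono Set.inter_subset_left))
    (closure_mono (Set.image_mono Set.inter_subset_right))) ?_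
  rintro x ⟨hS, hT⟩
  simpa [retract_eq_self hS] using retract_mem_closure S hT

theorem of_notMem_closure {S : Set V} {u : V} (hu : u ∉ S) :
    (of u : RAAG G) ∉ closure (of '' S) := by
  intro h
  have := retract_eq_self h
  rw [retract_of, Set.mulIndicator_of_notMem hu] at this
  exact of_ne_one u this.symm

section HNNDecomposition

open HNNExtension (t t_mul_of)

variable (G) (v : V)

def linkSubgroup : Subgroup (RAAG (G.induce {v}ᶜ)) :=
  closure (of '' {u | G.Adj v u})

abbrev HNNAtVertex := HNNExtension (RAAG (G.induce {v}ᶜ)) (linkSubgroup G v) (linkSubgroup G v)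
  (MulEquiv.refl _)

theorem commute_t_of_mem_linkSubgroup {a : RAAG (G.induce {v}ᶜ)} (ha : a ∈ linkSubgroup G v) :
    Commute (t : HNNAtVertex G v) (HNNExtension.of a) :=
  t_mul_of (φ := MulEquiv.refl _) ⟨a, ha⟩

open Classical in
noncomputable def toHNN : RAAG G →* HNNAtVertex G v :=
  lift (fun u => if h : u = v then t else HNNExtension.of (of ⟨u, h⟩)) fun x y hxy => by
    by_cases hx : x = v <;> by_cases hy : y = v
    · simp [hx, hy]
    · subst hx
      simpa [hy] using commute_t_of_mem_linkSubgroup G x (subset_closure ⟨⟨y, hy⟩, hxy, rfl⟩)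
    · subst hy
      simpa [hx] using
        (commute_t_of_mem_linkSubgroup G y (subset_closure ⟨⟨x, hx⟩, hxy.symm, rfl⟩)).symm
    · simpa [hx, hy] using (commute_of_adj (G := G.induce {v}ᶜ) (s := ⟨x, hx⟩) (t := ⟨y, hy⟩)
        hxy).map (HNNExtension.of : _ →* HNNAtVertex G v)

open Classical in
@[simp]
theorem toHNN_of (u : V) :
    toHNN G v (of u) = if h : u = v then t else HNNExtension.of (of ⟨u, h⟩) :=
  lift_of _ _ u

def inclusionInduce : RAAG (G.induce {v}ᶜ) →* RAAG G :=
  lift (fun u => of u.1) fun _ _ h => commute_of_adj h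

@[simp]
theorem inclusionInduce_of (u : ({v}ᶜ : Set V)) : inclusionInduce G v (of u) = of u.1 :=
  lift_of _ _ u

theorem map_linkSubgroup_le_centralizer :
    (linkSubgroup G v).map (inclusionInduce G v) ≤ centralizer {of v} := by
  rw [linkSubgroup, MonoidHom.map_closure, closure_le]
  rintro _ ⟨_, ⟨u, hu, rfl⟩, rfl⟩
  simpa [mem_centralizer_singleton_iff] using (commute_of_adj hu).eq.symm

noncomputable def ofHNN : HNNAtVertex G v →* RAAG G :=
  HNNExtension.lift (inclusionInduce G v) (of v) fun a =>
    (mem_centralizer_singleton_iff.1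
      (map_linkSubgroup_le_centralizer G v (mem_map_of_mem _ a.2))).symm

@[simp]
theorem ofHNN_of (a : RAAG (G.induce {v}ᶜ)) :
    ofHNN G v (HNNExtension.of a) = inclusionInduce G v a :=
  HNNExtension.lift_of _ _ _ a

@[simp]
theorem ofHNN_t : ofHNN G v t = of v :=
  HNNExtension.lift_t _ _ _

noncomputable def hnnEquiv : RAAG G ≃* HNNAtVertex G v :=
  MonoidHom.toMulEquiv (toHNN G v) (ofHNN G v)
    (PresentedGroup.ext fun u => by
      by_cases hu : u = v
      · subst hu; simp
      · simp [hu])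
    (HNNExtension.hom_ext
      (PresentedGroup.ext fun u => by simp [dif_neg (show (u : V) ≠ v from u.2)]) (by simp))

theorem hnnEquiv_symm_of (a : RAAG (G.induce {v}ᶜ)) :
    (hnnEquiv G v).symm (HNNExtension.of a) = inclusionInduce G v a :=
  ofHNN_of G v a

theorem center_le_map_inclusionInduce {v : V} (hv : ¬G.IsUniversal v) :
    center (RAAG G) ≤
      (center (RAAG (G.induce {v}ᶜ)) ⊓ linkSubgroup G v).map (inclusionInduce G v) := by
  obtain ⟨w, hvw, hw⟩ : ∃ w, v ≠ w ∧ ¬G.Adj v w := by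
    simpa [SimpleGraph.IsUniversal] using hv
  have hlink : linkSubgroup G v ≠ ⊤ := fun h =>
    of_notMem_closure (G := G.induce {v}ᶜ) (u := ⟨w, hvw.symm⟩) hw (h ▸ mem_top _)
  intro g hg
  obtain ⟨a, ha, hag⟩ :=
    HNNExtension.center_le_map_center_inf hlink (centerCongr (hnnEquiv G v) ⟨g, hg⟩).2
  refine ⟨a, ha, ?_⟩
  rw [← hnnEquiv_symm_of]
  exact (hnnEquiv G v).symm_apply_eq.2 hag

end HNNDecomposition

theorem _root_.SimpleGraph.IsUniversal.of_induce_compl_singleton {v : V} {u : ({v}ᶜ : Set V)}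
    (hu : (G.induce {v}ᶜ).IsUniversal u) (hvu : G.Adj v u) : G.IsUniversal u := by
  intro w huw
  by_cases hw : w = v
  · subst hw
    exact hvu.symm
  · exact hu (w := ⟨w, hw⟩) fun h => huw (congrArg Subtype.val h)

theorem center_le_closure_universalVerts [Finite V] (G : SimpleGraph V) :
    center (RAAG G) ≤ closure (of '' G.universalVerts) := by
  induction hn : Nat.card V using Nat.strong_induction_on generalizing V with
  | _ n ih =>
  by_cases hU : ∀ v, G.IsUniversal v
  · rw [show G.universalVerts = Set.univ from Set.eq_univ_of_forall hU, Set.image_univ,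
      closure_range_of]
    exact le_top
  obtain ⟨v, hv⟩ := not_forall.1 hU
  have hcard : Nat.card ({v}ᶜ : Set V) < n := hn ▸ Finite.card_subtype_lt (x := v) (by simp)
  intro g hg
  obtain ⟨a, ⟨ha, hav⟩, rfl⟩ := center_le_map_inclusionInduce G hv hg
  have ha' : a ∈ closure (of '' ((G.induce {v}ᶜ).universalVerts ∩ {u | G.Adj v u})) := by
    rw [closure_of_image_inter]
    exact ⟨ih _ hcard _ rfl ha, hav⟩
  suffices (closure (of '' ((G.induce {v}ᶜ).universalVerts ∩ {u | G.Adj v u}))).map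
      (inclusionInduce G v) ≤ closure (of '' G.universalVerts) from this (mem_map_of_mem _ ha')
  rw [MonoidHom.map_closure, closure_le]
  rintro _ ⟨_, ⟨u, ⟨hu, hvu⟩, rfl⟩, rfl⟩
  rw [inclusionInduce_of]
  exact subset_closure ⟨u, hu.of_induce_compl_singleton hvu, rfl⟩

theorem center_eq_closure_universalVerts [Finite V] (G : SimpleGraph V) :
    center (RAAG G) = closure (of '' G.universalVerts) :=
  le_antisymm (center_le_closure_universalVerts G)
    ((closure_le _).2 (Set.image_subset_iff.2 fun _ hv => of_mem_center hv))

end RAAG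

/-- The center of a right-angled Artin group is the special subgroup generated by the
vertices adjacent to every other vertex; in particular, if no vertex is adjacent to all
other vertices then the center is trivial. -/
theorem raag_center {V : Type*} [Fintype V] (G : SimpleGraph V) :
    Subgroup.center (RAAG G) =
      Subgroup.closure (PresentedGroup.of '' {v : V | ∀ w : V, w ≠ v → G.Adj v w}) ∧
    ((∀ v : V, ∃ w : V, w ≠ v ∧ ¬ G.Adj v w) → Subgroup.center (RAAG G) = ⊥) := by
  have hU : {v : V | ∀ w : V, w ≠ v → G.Adj v w} = G.universalVerts := by
    ext v
    simp [SimpleGraph.universalVerts, SimpleGraph.IsUniversal, ne_comm]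
  have hcenter : Subgroup.center (RAAG G) =
      Subgroup.closure (PresentedGroup.of '' {v : V | ∀ w : V, w ≠ v → G.Adj v w}) :=
    hU ▸ RAAG.center_eq_closure_universalVerts G
  refine ⟨hcenter, fun h => ?_⟩
  rw [hcenter, Subgroup.closure_eq_bot_iff]
  rintro _ ⟨v, hv, rfl⟩
  obtain ⟨w, hwv, hvw⟩ := h v
  exact absurd (hv w hwv) hvw
end

section
/- In the right-angled Artin group A_Γ, two generators s and t satisfy st = ts if and only if {s,t} is an edge of Γ (for s ≠ t). Consequently, A_Γ ≅ A_{Γ'} (via a graph isomorphism on generators) implies Γ and Γ' have the same edge relation on corresponding vertices. -/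
lemma raag_comm_of_adj {V : Type*} (G : SimpleGraph V) {s t : V} (h : G.Adj s t) :
    (PresentedGroup.of s * PresentedGroup.of t : RAAG G) =
      PresentedGroup.of t * PresentedGroup.of s := by
  have hmem : (FreeGroup.of s * FreeGroup.of t * (FreeGroup.of s)⁻¹ * (FreeGroup.of t)⁻¹ :
      FreeGroup V) ∈ Subgroup.normalClosure (raagRels G) :=
    Subgroup.subset_normalClosure ⟨s, t, h, rfl⟩
  have h1 : ((QuotientGroup.mk (FreeGroup.of s * FreeGroup.of t * (FreeGroup.of s)⁻¹ *
      (FreeGroup.of t)⁻¹) : RAAG G)) = 1 := (QuotientGroup.eq_one_iff _).2 hmem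
  have h2 : (PresentedGroup.of s * PresentedGroup.of t * (PresentedGroup.of s)⁻¹ *
      (PresentedGroup.of t)⁻¹ : RAAG G) = 1 := h1
  calc PresentedGroup.of s * PresentedGroup.of t
      = (PresentedGroup.of s * PresentedGroup.of t * (PresentedGroup.of s)⁻¹ *
        (PresentedGroup.of t)⁻¹) * (PresentedGroup.of t * PresentedGroup.of s) := by group
    _ = PresentedGroup.of t * PresentedGroup.of s := by rw [h2]; group

lemma raag_adj_of_comm {V : Type*} (G : SimpleGraph V) {s t : V} (hst : s ≠ t)
    (h : (PresentedGroup.of s * PresentedGroup.of t : RAAG G) =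
      PresentedGroup.of t * PresentedGroup.of s) : G.Adj s t := by
  by_contra hadj
  classical
  set a : Equiv.Perm (Fin 3) := Equiv.swap 0 1 with ha
  set b : Equiv.Perm (Fin 3) := Equiv.swap 0 2 with hb
  have hab : a * b ≠ b * a := by decide
  set f : V → Equiv.Perm (Fin 3) := fun v => if v = s then a else if v = t then b else 1 with hf
  have hrels : ∀ r ∈ raagRels G, FreeGroup.lift f r = 1 := by
    rintro r ⟨u, w, huw, rfl⟩
    simp only [map_mul, map_inv, FreeGroup.lift_apply_of]
    have hcomm : f u * f w = f w * f u := by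
      rcases eq_or_ne u s with hu | hu
      · subst hu
        have hws : w ≠ u := (huw.ne).symm
        have hwt : w ≠ t := fun hw => hadj (hw ▸ huw)
        simp [hf, hws, hwt]
      · rcases eq_or_ne u t with hu' | hu'
        · subst hu'
          have hws : w ≠ s := fun hw => hadj (hw ▸ huw.symm)
          have hwt : w ≠ u := huw.ne.symm
          simp [hf, hu, hws, hwt]
        · simp [hf, hu, hu']
    rw [hcomm]; group
  have := congrArg (PresentedGroup.toGroup hrels) h
  simp only [map_mul, PresentedGroup.toGroup.of] at this
  have hfs : f s = a := by simp [hf]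
  have hft : f t = b := by simp [hf, hst.symm]
  rw [hfs, hft] at this
  exact hab this

/-- Two distinct generators of a right-angled Artin group commute iff they are adjacent
in the defining graph; consequently an isomorphism of right-angled Artin groups carrying
generators to generators induces an isomorphism of edge relations. -/
theorem raag_generators_commute_iff_adjacent {V V' : Type*} [Fintype V] [Fintype V']
    (G : SimpleGraph V) (G' : SimpleGraph V') :
    (∀ s t : V, s ≠ t →
      ((PresentedGroup.of s * PresentedGroup.of t : RAAG G) =
          PresentedGroup.of t * PresentedGroup.of s ↔ G.Adj s t)) ∧
    (∀ (e : V ≃ V') (φ : RAAG G ≃* RAAG G'),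
      (∀ v : V, φ (PresentedGroup.of v) = PresentedGroup.of (e v)) →
      ∀ s t : V, G.Adj s t ↔ G'.Adj (e s) (e t)) := by
  constructor
  · exact fun s t hst => ⟨raag_adj_of_comm G hst, raag_comm_of_adj G⟩
  · intro e φ hφ s t
    rcases eq_or_ne s t with rfl | hst
    · simp
    constructor
    · intro h
      apply raag_adj_of_comm G' (fun hee => hst (e.injective hee))
      have := raag_comm_of_adj G h
      have := congrArg φ this
      simpa [map_mul, hφ] using this
    · intro h
      apply raag_adj_of_comm G hst
      have := raag_comm_of_adj G' h
      apply φ.injective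
      simpa [map_mul, hφ] using this
end
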